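/- arXiv:1007.4476 — 5 statements merged into one kernel-verified Lean document; each statement's English description precedes it below -/
import Mathlib

section
/- Let TS = (S, →) be a finitely branching transition system equipped with a well-quasi-order ≤ on S satisfying strong compatibility: for all s₁ ≤ t₁ and all transitions s₁ → s₂ there exists t₂ with t₁ → t₂ and s₂ ≤ t₂. Then for every state s ∈ S, there exists an infinite computation starting from s if and only if there exists a finite computation s = s₀ → s₁ → ... → s_n with indices i < j ≤ n such that s_i ≤ s_j. -/
/-- In a finitely branching well-structured transition system with strong compatibility,
a state admits an infinite computation iff it admits a finite computation
`s = s₀ → ⋯ → s_n` with indices `i < j ≤ n` such that `s_i ≤ s_j`. -/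
theorem stmt_4 {S : Type*} (step : S → S → Prop) (le : S → S → Prop)
    (hfb : ∀ s : S, {t : S | step s t}.Finite)
    (hrefl : Reflexive le) (htrans : Transitive le)
    (hwqo : ∀ f : ℕ → S, ∃ i j : ℕ, i < j ∧ le (f i) (f j))
    (hcompat : ∀ s₁ t₁ s₂ : S, le s₁ t₁ → step s₁ s₂ → ∃ t₂ : S, step t₁ t₂ ∧ le s₂ t₂) :
    ∀ s : S,
      (∃ f : ℕ → S, f 0 = s ∧ ∀ n : ℕ, step (f n) (f (n + 1))) ↔
      (∃ (n : ℕ) (g : ℕ → S), g 0 = s ∧ (∀ k < n, step (g k) (g (k + 1))) ∧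
        ∃ i j : ℕ, i < j ∧ j ≤ n ∧ le (g i) (g j)) := by
  intro s
  constructor
  · rintro ⟨f, hf0, hfstep⟩
    obtain ⟨i, j, hij, hle⟩ := hwqo f
    exact ⟨j, f, hf0, fun k _ => hfstep k, i, j, hij, le_rfl, hle⟩
  · rintro ⟨n, g, hg0, hgstep, i, j, hij, hjn, hle⟩
    classical
    -- key pumping step
    have key : ∀ pr : {px : ℕ × S // i ≤ px.1 ∧ px.1 < j ∧ le (g px.1) px.2},
        ∃ pr' : {px : ℕ × S // i ≤ px.1 ∧ px.1 < j ∧ le (g px.1) px.2},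
          step pr.1.2 pr'.1.2 := by
      rintro ⟨⟨p, x⟩, hip, hpj, hx⟩
      have hs : step (g p) (g (p + 1)) := hgstep p (by omega)
      obtain ⟨y, hy1, hy2⟩ := hcompat _ _ _ hx hs
      by_cases h : p + 1 = j
      · exact ⟨⟨(i, y), le_refl i, hij, htrans hle (h ▸ hy2)⟩, hy1⟩
      · exact ⟨⟨(p + 1, y), by omega, by omega, hy2⟩, hy1⟩
    choose next hnext using key
    -- infinite pumped sequence starting at g j
    set a0 : {px : ℕ × S // i ≤ px.1 ∧ px.1 < j ∧ le (g px.1) px.2} :=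
      ⟨(i, g j), le_refl i, hij, hle⟩ with ha0
    set aux : ℕ → {px : ℕ × S // i ≤ px.1 ∧ px.1 < j ∧ le (g px.1) px.2} :=
      fun k => Nat.rec a0 (fun _ prev => next prev) k with haux
    have haux0 : (aux 0).1.2 = g j := rfl
    have hauxsucc : ∀ k, aux (k + 1) = next (aux k) := fun k => rfl
    have hauxstep : ∀ k, step (aux k).1.2 (aux (k + 1)).1.2 := by
      intro k
      rw [hauxsucc]
      exact hnext (aux k)
    -- glue the finite prefix with the pumped sequence
    refine ⟨fun t => if t < j then g t else (aux (t - j)).1.2, ?_, ?_⟩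
    · simp only [if_pos (show (0 : ℕ) < j by omega)]
      exact hg0
    · intro t
      rcases lt_trichotomy (t + 1) j with h | h | h
      · simp only [if_pos (show t < j by omega), if_pos h]
        exact hgstep t (by omega)
      · simp only [if_pos (show t < j by omega), if_neg (show ¬ t + 1 < j by omega)]
        have : t + 1 - j = 0 := by omega
        rw [this, haux0, ← h]
        exact hgstep t (by omega)
      · simp only [if_neg (show ¬ t < j by omega), if_neg (show ¬ t + 1 < j by omega)]
        have h1 : t + 1 - j = (t - j) + 1 := by omega
        rw [h1]
        exact hauxstep (t - j)
end

section
/- Let X be a finite set of variables and let s = ⟨c₁, c₂⟩⟨c₂, c₃⟩⋯⟨c_{n-1}, c_n⟩ be a strictly increasing reactive sequence with respect to X, i.e., a sequence of constraints c₁, ..., c_n each with free variables in X such that CT ⊨ c_{i+1} → c_i for all i and CT ⊭ c_i → c_{i+1} for all i < n (each constraint is strictly stronger than the previous). If each constraint c_i is (up to logical equivalence) a conjunction of equalities between the variables in X and constants, then n ≤ |X| + 2. -/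
/-- A subset of valuations is definable by a conjunction of equalities between variables
in `X` and constants in `C`. -/
def EqualityDefinable {X C : Type*} (s : Set (X → C)) : Prop :=
  ∃ (R : Set (X × X)) (L : Set (X × C)),
    s = {v : X → C | (∀ p ∈ R, v p.1 = v p.2) ∧ ∀ p ∈ L, v p.1 = p.2}

namespace Stmt6Aux

variable {X C : Type*}

/-- Semantic equality relation induced by a set of valuations. -/
def Rel (s : Set (X → C)) (x y : X) : Prop := ∀ v ∈ s, v x = v y

/-- Variables not fixed over `s`. -/
def NF (s : Set (X → C)) : Set X := {x | ∃ v ∈ s, ∃ w ∈ s, v x ≠ w x}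

def std (s : Set (X → C)) : Setoid (NF s) where
  r a b := Rel s a.1 b.1
  iseqv := ⟨fun _ _ _ => rfl, fun h v hv => (h v hv).symm,
    fun h1 h2 v hv => (h1 v hv).trans (h2 v hv)⟩

noncomputable def rank (s : Set (X → C)) : ℕ := Nat.card (Quotient (std s))

lemma rank_le [Finite X] (s : Set (X → C)) : rank s ≤ Nat.card X := by
  have h1 : Nat.card (Quotient (std s)) ≤ Nat.card (NF s) :=
    Nat.card_le_card_of_surjective (Quotient.mk (std s)) Quotient.mk''_surjective
  have h2 : Nat.card (NF s) ≤ Nat.card X :=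
    Nat.card_le_card_of_injective Subtype.val Subtype.val_injective
  exact le_trans h1 h2

lemma nf_mono {s t : Set (X → C)} (hsub : s ⊆ t) : NF s ⊆ NF t := by
  rintro x ⟨v, hv, w, hw, hvw⟩
  exact ⟨v, hsub hv, w, hsub hw, hvw⟩

lemma rel_anti {s t : Set (X → C)} (hsub : s ⊆ t) {x y : X} (h : Rel t x y) : Rel s x y :=
  fun v hv => h v (hsub hv)

lemma key [Finite X] {s t : Set (X → C)} (hs : EqualityDefinable s) (hne : s.Nonempty)
    (hsub : s ⊆ t) (hne' : s ≠ t) : rank s < rank t := by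
  classical
  -- the map from t-classes to s-classes (or `none`)
  have wd : ∀ a b : NF t, Rel t a.1 b.1 →
      (if h : a.1 ∈ NF s then some (Quotient.mk (std s) ⟨a.1, h⟩) else none) =
      (if h : b.1 ∈ NF s then some (Quotient.mk (std s) ⟨b.1, h⟩) else none) := by
    intro a b hab
    have hrs : Rel s a.1 b.1 := rel_anti hsub hab
    have hiff : a.1 ∈ NF s ↔ b.1 ∈ NF s := by
      constructor
      · rintro ⟨v, hv, w, hw, hvw⟩
        exact ⟨v, hv, w, hw, by rw [← hrs v hv, ← hrs w hw]; exact hvw⟩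
      · rintro ⟨v, hv, w, hw, hvw⟩
        exact ⟨v, hv, w, hw, by rw [hrs v hv, hrs w hw]; exact hvw⟩
    by_cases ha : a.1 ∈ NF s
    · have hb : b.1 ∈ NF s := hiff.1 ha
      simp only [dif_pos ha, dif_pos hb, Option.some.injEq]
      exact Quotient.sound hrs
    · have hb : b.1 ∉ NF s := fun h => ha (hiff.2 h)
      simp only [dif_neg ha, dif_neg hb]
  let g : Quotient (std t) → Option (Quotient (std s)) :=
    Quotient.lift (fun a : NF t =>
      if h : a.1 ∈ NF s then some (Quotient.mk (std s) ⟨a.1, h⟩) else none) wd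
  have hg : ∀ q : Quotient (std s), ∃ p, g p = some q := by
    intro q
    induction q using Quotient.ind with
    | _ x =>
      refine ⟨Quotient.mk (std t) ⟨x.1, nf_mono hsub x.2⟩, ?_⟩
      show (if h : x.1 ∈ NF s then some (Quotient.mk (std s) ⟨x.1, h⟩) else none) = _
      rw [dif_pos x.2]
  -- the section of g, injective
  let h : Quotient (std s) → Quotient (std t) := fun q => (hg q).choose
  have hgh : ∀ q, g (h q) = some q := fun q => (hg q).choose_spec
  have hinj : Function.Injective h := by
    intro q1 q2 he
    have := hgh q1
    rw [he, hgh q2, Option.some_inj] at this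
    exact this.symm
  by_contra hlt
  push_neg at hlt
  have hbij : Function.Bijective h := hinj.bijective_of_nat_card_le hlt
  -- from bijectivity: g is injective and never none
  have gnone : ∀ p, g p ≠ none := by
    intro p
    obtain ⟨q, rfl⟩ := hbij.2 p
    rw [hgh q]; simp
  have ginj : ∀ p1 p2, g p1 = g p2 → p1 = p2 := by
    intro p1 p2 he
    obtain ⟨q1, rfl⟩ := hbij.2 p1
    obtain ⟨q2, rfl⟩ := hbij.2 p2
    rw [hgh q1, hgh q2, Option.some_inj] at he
    rw [he]
  -- now derive s = t, contradiction
  apply hne'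
  obtain ⟨v₀, hv₀⟩ := hne
  refine Set.Subset.antisymm hsub ?_
  intro v hv
  -- x ∈ NF t implies x ∈ NF s
  have hNFst : ∀ x (hx : x ∈ NF t), x ∈ NF s := by
    intro x hx
    by_contra hxs
    have : g (Quotient.mk (std t) ⟨x, hx⟩) = none := by
      show (if h : x ∈ NF s then some (Quotient.mk (std s) ⟨x, h⟩) else none) = none
      rw [dif_neg hxs]
    exact gnone _ this
  -- (ii) fixed values over s are respected by v
  have fix : ∀ x a, (∀ w ∈ s, w x = a) → v x = a := by
    intro x a hxa
    by_cases hx : x ∈ NF t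
    · obtain ⟨w1, h1, w2, h2, hne12⟩ := hNFst x hx
      exact absurd ((hxa w1 h1).trans (hxa w2 h2).symm) hne12
    · have : v x = v₀ x := by
        by_contra hne2
        exact hx ⟨v, hv, v₀, hsub hv₀, hne2⟩
      rw [this, hxa v₀ hv₀]
  -- (i) equalities over s are respected by v
  have eqr : ∀ x y, Rel s x y → v x = v y := by
    intro x y hxy
    by_cases hx : x ∈ NF t <;> by_cases hy : y ∈ NF t
    · -- both nonfixed: use injectivity of g
      have hxs := hNFst x hx
      have hys := hNFst y hy
      have : g (Quotient.mk (std t) ⟨x, hx⟩) = g (Quotient.mk (std t) ⟨y, hy⟩) := by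
        show (if h : x ∈ NF s then some (Quotient.mk (std s) ⟨x, h⟩) else none) =
          (if h : y ∈ NF s then some (Quotient.mk (std s) ⟨y, h⟩) else none)
        rw [dif_pos hxs, dif_pos hys, Option.some_inj]
        exact Quotient.sound hxy
      have := ginj _ _ this
      have hrt : Rel t x y := Quotient.exact this
      exact hrt v hv
    · -- x nonfixed, y fixed: contradiction
      exfalso
      have hxs := hNFst x hx
      obtain ⟨w1, h1, w2, h2, hne12⟩ := hxs
      have e1 : w1 y = w2 y := by
        by_contra hc
        exact hy ⟨w1, hsub h1, w2, hsub h2, hc⟩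
      exact hne12 (by rw [hxy w1 h1, hxy w2 h2, e1])
    · -- x fixed, y nonfixed: symmetric
      exfalso
      have hys := hNFst y hy
      obtain ⟨w1, h1, w2, h2, hne12⟩ := hys
      have e1 : w1 x = w2 x := by
        by_contra hc
        exact hx ⟨w1, hsub h1, w2, hsub h2, hc⟩
      exact hne12 (by rw [← hxy w1 h1, ← hxy w2 h2, e1])
    · -- both fixed
      have ex : v x = v₀ x := by
        by_contra hc; exact hx ⟨v, hv, v₀, hsub hv₀, hc⟩
      have ey : v y = v₀ y := by
        by_contra hc; exact hy ⟨v, hv, v₀, hsub hv₀, hc⟩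
      rw [ex, ey, hxy v₀ hv₀]
  -- conclude v ∈ s using the definability of s
  obtain ⟨R, L, hRL⟩ := hs
  rw [hRL]
  constructor
  · intro p hp
    apply eqr
    intro w hw
    rw [hRL] at hw
    exact hw.1 p hp
  · intro p hp
    apply fix
    intro w hw
    rw [hRL] at hw
    exact hw.2 p hp

end Stmt6Aux

/-- A strictly increasing (w.r.t. entailment, i.e. inclusion of solution sets) chain of
equality constraints over `w` variables has length at most `w + 2`. -/
theorem stmt_6 {X C : Type*} [Fintype X] (n : ℕ) (c : Fin n → Set (X → C))
    (hdef : ∀ i : Fin n, EqualityDefinable (c i))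
    (hmono : ∀ (i : Fin n) (h : i.val + 1 < n), c ⟨i.val + 1, h⟩ ⊆ c i)
    (hstrict : ∀ (i : Fin n) (h : i.val + 1 < n), c ⟨i.val + 1, h⟩ ≠ c i) :
    n ≤ Fintype.card X + 2 := by
  classical
  open Stmt6Aux in
  rcases Nat.eq_zero_or_pos n with rfl | hn
  · omega
  -- measure
  set M : Fin n → ℕ := fun i => if (c i) = ∅ then 0 else rank (c i) + 1 with hM
  have hMle : ∀ i, M i ≤ Fintype.card X + 1 := by
    intro i
    simp only [hM]
    split
    · omega
    · have := Stmt6Aux.rank_le (c i)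
      rw [Nat.card_eq_fintype_card] at this
      omega
  have hstep : ∀ (i : Fin n) (h : i.val + 1 < n), M ⟨i.val + 1, h⟩ < M i := by
    intro i h
    have hsub := hmono i h
    have hne := hstrict i h
    by_cases he : c ⟨i.val + 1, h⟩ = ∅
    · have : c i ≠ ∅ := by
        intro hc
        apply hne
        rw [he, hc]
      simp only [hM, if_pos he, if_neg this]
      omega
    · have hne2 : c i ≠ ∅ := by
        intro hc
        exact he (Set.subset_eq_empty hsub hc)
      have hlt : rank (c ⟨i.val + 1, h⟩) < rank (c i) :=
        Stmt6Aux.key (hdef _) (Set.nonempty_iff_ne_empty.2 he) hsub hne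
      simp only [hM, if_neg he, if_neg hne2]
      omega
  -- induction: M ⟨k⟩ + k ≤ card X + 1
  have main : ∀ k (hk : k < n), M ⟨k, hk⟩ + k ≤ Fintype.card X + 1 := by
    intro k
    induction k with
    | zero => intro hk; simpa using hMle ⟨0, hk⟩
    | succ m ih =>
      intro hk
      have hm : m < n := by omega
      have h1 := hstep ⟨m, hm⟩ hk
      have h2 := ih hm
      simp only [Fin.val_mk] at h1
      omega
  have := main (n - 1) (by omega)
  omega
end

section
/- Let (S, →) be a finitely branching transition system with computable successor function, equipped with a decidable well-quasi-order ≤ that is strongly compatible with →. Then the set of states from which an infinite computation exists is decidable. -/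
/-!
Call a finite computation `s₀ → ⋯ → sₙ` good if `sᵢ ≤ sⱼ` for some `i < j`, and bad otherwise.
If a bad computation `s₀ → ⋯ → sₙ` has a successor `t ≥ sᵢ` of `sₙ`, strong compatibility shows
that a state dominating some `sₖ` has a successor which again dominates some `sₖ` (for `k = n`,
it dominates `t ≥ sᵢ`), so `s₀` has an infinite computation. Conversely, an infinite computation
has a good prefix because `≤` is a wqo. Hence `s` has an infinite computation iff some bad
computation from `s` has a good one-step extension.

The bad computations from `s` form a finitely branching tree; an infinite branch would be an
infinite bad sequence, so by Kőnig's lemma the tree is finite. Exploring it level by level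
therefore terminates.
-/

namespace Computable

variable {α β σ : Type*} [Primcodable α] [Primcodable β] [Primcodable σ]

theorem list_map {f : α → List β} {g : α → β → σ} (hf : Computable f) (hg : Computable₂ g) :
    Computable fun a => (f a).map (g a) := by
  have hrec : Computable fun a => Nat.rec (motive := fun _ => List σ) []
      (fun n acc => acc ++ ((f a)[n]?.map (g a)).toList) (f a).length :=
    nat_rec (list_length.comp hf) (const [])
      (list_append.comp (snd.comp snd) (Primrec.optionToList.to_comp.comp
        (option_map (list_getElem?.comp (hf.comp fst) (fst.comp snd))
          (hg.comp (fst.comp fst) snd).to₂))).to₂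
  refine hrec.of_eq fun a => ?_
  suffices ∀ n, Nat.rec (motive := fun _ => List σ) []
      (fun n acc => acc ++ ((f a)[n]?.map (g a)).toList) n = ((f a).take n).map (g a) by
    simp [this]
  intro n
  induction n with
  | zero => rfl
  | succ n ih => rw [List.take_add_one, List.map_append, ← ih, ← Option.toList_map]

theorem list_flatMap {f : α → List β} {g : α → β → List σ} (hf : Computable f)
    (hg : Computable₂ g) : Computable fun a => (f a).flatMap (g a) :=
  (Primrec.list_flatten.to_comp.comp (list_map hf hg)).of_eq fun _ => (List.flatMap_def ..).symm

theorem list_filter {f : α → List β} {p : α → β → Bool} (hf : Computable f)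
    (hp : Computable₂ p) : Computable fun a => (f a).filter (p a) := by
  refine (list_flatMap hf (cond hp (list_cons.comp snd (const [])) (const [])).to₂).of_eq
    fun a => ?_
  induction f a with
  | nil => rfl
  | cons b l ih => cases h : p a b <;> simp_all

theorem list_any {f : α → List β} {p : α → β → Bool} (hf : Computable f)
    (hp : Computable₂ p) : Computable fun a => (f a).any (p a) := by
  have hor : Primrec fun L : List Bool => decide (∃ b ∈ L, b = true) :=
    (PrimrecPred.exists_mem_list (Primrec.eq.comp Primrec.id (Primrec.const true))).decide
  exact (hor.to_comp.comp (list_map hf hp)).of_eq fun a => by simp [List.any_eq]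

end Computable

theorem List.IsChain.exists_rel_of_mem_tail {α : Type*} {R : α → α → Prop} :
    ∀ {l : List α}, l.IsChain R → ∀ {x}, x ∈ l.tail → ∃ y ∈ l, R y x
  | [], _, _, hx => by simp at hx
  | [_], _, _, hx => by simp at hx
  | u :: v :: l, hl, x, hx => by
    rw [List.isChain_cons_cons] at hl
    rcases List.mem_cons.mp hx with rfl | hx
    · exact ⟨u, by simp, hl.1⟩
    · obtain ⟨y, hy, hyx⟩ := hl.2.exists_rel_of_mem_tail hx
      exact ⟨y, List.mem_cons_of_mem _ hy, hyx⟩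

namespace WSTS

variable {S : Type*}

def HasInfiniteRun (step : S → S → Prop) (s : S) : Prop :=
  ∃ f : ℕ → S, f 0 = s ∧ ∀ n, step (f n) (f (n + 1))

def StronglyCompatible (step le : S → S → Prop) : Prop :=
  ∀ s₁ t₁ s₂ : S, le s₁ t₁ → step s₁ s₂ → ∃ t₂ : S, step t₁ t₂ ∧ le s₂ t₂

-- Finite computations from `s` are stored newest state first, so that extending one is
-- `List.cons`; `IsBad` then says that no state is dominated by a later one.
def IsHistory (step : S → S → Prop) (s : S) (l : List S) : Prop :=
  l.IsChain (fun b a => step a b) ∧ l.getLast? = some s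

def IsBad (le : S → S → Prop) (l : List S) : Prop :=
  l.Pairwise fun b a => ¬le a b

theorem isHistory_singleton {step : S → S → Prop} {s x : S} : IsHistory step s [x] ↔ x = s := by
  simp [IsHistory, eq_comm]

theorem isHistory_cons_cons {step : S → S → Prop} {s t u : S} {l : List S} :
    IsHistory step s (t :: u :: l) ↔ step u t ∧ IsHistory step s (u :: l) := by
  simp [IsHistory, List.isChain_cons_cons, and_assoc]

theorem IsHistory.drop {step : S → S → Prop} {s : S} {l : List S} (hl : IsHistory step s l)
    {k : ℕ} (hk : k < l.length) : IsHistory step s (l.drop k) :=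
  ⟨hl.1.drop k, by rw [List.getLast?_drop, if_neg (by omega), hl.2]⟩

def revPrefix (f : ℕ → S) (n : ℕ) : List S := ((List.range (n + 1)).map f).reverse

theorem revPrefix_eq_cons (f : ℕ → S) (n : ℕ) :
    revPrefix f n = f n :: ((List.range n).map f).reverse := by
  simp [revPrefix, List.range_succ]

theorem mem_revPrefix {f : ℕ → S} {n : ℕ} {x : S} : x ∈ revPrefix f n ↔ ∃ i ≤ n, f i = x := by
  simp [revPrefix]

theorem isHistory_revPrefix {step : S → S → Prop} {f : ℕ → S}
    (hf : ∀ k, step (f k) (f (k + 1))) (n : ℕ) : IsHistory step (f 0) (revPrefix f n) := by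
  refine ⟨?_, by simp [revPrefix, List.getLast?_reverse, List.head?_range]⟩
  rw [revPrefix, List.isChain_reverse, List.isChain_map, List.isChain_range_succ]
  exact fun k _ => hf k

theorem isBad_revPrefix {le : S → S → Prop} {f : ℕ → S} {n : ℕ}
    (h : ∀ i j, i < j → j ≤ n → ¬le (f i) (f j)) : IsBad le (revPrefix f n) := by
  rw [IsBad, revPrefix, List.pairwise_reverse, List.pairwise_map]
  exact List.pairwise_lt_range.imp_of_mem fun hi hj hij =>
    h _ _ hij (Nat.lt_succ_iff.mp (List.mem_range.mp hj))

theorem exists_not_isBad_of_drop_eq {le : S → S → Prop} (hwqo : WellQuasiOrdered le)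
    {F : ℕ → List S} (hne : ∀ i, F i ≠ []) (hF : ∀ i j, i ≤ j → (F j).drop (j - i) = F i) :
    ∃ j, ¬IsBad le (F j) := by
  obtain ⟨i, j, hij, hle⟩ := hwqo fun i => (F i).head (hne i)
  refine ⟨j, fun hbad => ?_⟩
  rw [IsBad, ← List.cons_head_tail (hne j), List.pairwise_cons] at hbad
  refine hbad.1 _ ?_ hle
  have htail : (F j).tail.drop (j - i - 1) = F i := by
    rw [← List.tail_drop_eq_drop_tail, List.tail_drop, ← hF i j hij.le]; congr 1; omega
  have hsub : ∀ x ∈ F i, x ∈ (F j).tail := fun x hx => by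
    rw [← htail] at hx; exact List.mem_of_mem_drop hx
  exact hsub _ (List.head_mem _)

section Pumping

variable {step le : S → S → Prop}

theorem hasInfiniteRun_of_forall_exists_step {P : S → Prop}
    (h : ∀ y, P y → ∃ z, step y z ∧ P z) {y : S} (hy : P y) : HasInfiniteRun step y := by
  choose! next hnext using h
  have hP : ∀ n, P (next^[n] y) := fun n => by
    induction n with
    | zero => exact hy
    | succ n ih => rw [Function.iterate_succ_apply']; exact (hnext _ ih).2
  refine ⟨fun n => next^[n] y, rfl, fun n => ?_⟩
  simp only [Function.iterate_succ_apply']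
  exact (hnext _ (hP n)).1

theorem hasInfiniteRun_of_le_of_mem [IsTrans S le] (hcompat : StronglyCompatible step le)
    {A : Set S} (hA : ∀ z ∈ A, ∃ z', step z z' ∧ ∃ w ∈ A, le w z') {z y : S} (hz : z ∈ A)
    (hzy : le z y) : HasInfiniteRun step y := by
  refine hasInfiniteRun_of_forall_exists_step (P := fun y => ∃ z ∈ A, le z y) ?_ ⟨z, hz, hzy⟩
  rintro y ⟨z, hz, hzy⟩
  obtain ⟨z', hzz', w, hw, hwz'⟩ := hA z hz
  obtain ⟨y', hyy', hzy'⟩ := hcompat z y z' hzy hzz'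
  exact ⟨y', hyy', w, hw, trans_of le hwz' hzy'⟩

theorem hasInfiniteRun_of_isHistory_of_le [Std.Refl le] [IsTrans S le]
    (hcompat : StronglyCompatible step le) {s u t x : S} {l : List S}
    (hl : IsHistory step s (u :: l)) (hut : step u t) (hx : x ∈ u :: l) (hxt : le x t) :
    HasInfiniteRun step s := by
  refine hasInfiniteRun_of_le_of_mem hcompat (A := {z | z ∈ u :: l}) ?_
    (List.mem_of_getLast? hl.2) (refl_of le s)
  intro z hz
  rcases List.mem_cons.mp hz with rfl | hz
  · exact ⟨t, hut, x, hx, hxt⟩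
  · obtain ⟨z', hz', hzz'⟩ := hl.1.exists_rel_of_mem_tail hz
    exact ⟨z', hzz', z', hz', refl_of le z'⟩

end Pumping

section Search

variable (succ : S → List S) (leb : S → S → Bool)

def headSucc (l : List S) : List S := (l.head?.map succ).getD []

def dominates (l : List S) (t : S) : Bool := l.any (leb · t)

def badChildren (l : List S) : List (List S) :=
  ((headSucc succ l).filter fun t => !dominates leb l t).map (· :: l)

def hasGoodChild (l : List S) : Bool := (headSucc succ l).any (dominates leb l)

def badHistories (s : S) : ℕ → List (List S)
  | 0 => [[s]]
  | n + 1 => (badHistories s n).flatMap (badChildren succ leb)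

def hasGoodChildBefore (s : S) : ℕ → Bool
  | 0 => false
  | n + 1 => hasGoodChildBefore s n || (badHistories succ leb s n).any (hasGoodChild succ leb)

def verdict (s : S) (n : ℕ) : Option Bool :=
  bif (badHistories succ leb s n).isEmpty then some (hasGoodChildBefore succ leb s n) else none

variable {succ leb}

theorem hasGoodChildBefore_eq_true {s : S} {n : ℕ} :
    hasGoodChildBefore succ leb s n = true ↔
      ∃ m < n, ∃ l ∈ badHistories succ leb s m, hasGoodChild succ leb l = true := by
  induction n with
  | zero => simp [hasGoodChildBefore]
  | succ n ih => simp [hasGoodChildBefore, ih, Nat.le_iff_lt_or_eq, or_and_right, exists_or]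

theorem badHistories_eq_nil_of_le {s : S} {m n : ℕ} (hm : badHistories succ leb s m = [])
    (hmn : m ≤ n) : badHistories succ leb s n = [] := by
  induction n, hmn using Nat.le_induction with
  | base => exact hm
  | succ n _ ih => simp [badHistories, ih]

theorem verdict_eq_some {s : S} {n : ℕ} {b : Bool} :
    verdict succ leb s n = some b ↔
      badHistories succ leb s n = [] ∧ hasGoodChildBefore succ leb s n = b := by
  unfold verdict
  cases h : (badHistories succ leb s n).isEmpty <;> simp_all

variable {step le : S → S → Prop}

theorem dominates_eq_true (hleb : ∀ s t, leb s t = true ↔ le s t) {l : List S} {t : S} :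
    dominates leb l t = true ↔ ∃ x ∈ l, le x t := by
  simp [dominates, hleb]

variable (hsucc : ∀ s t, step s t ↔ t ∈ succ s) (hleb : ∀ s t, leb s t = true ↔ le s t)
include hsucc hleb

theorem mem_badChildren {u : S} {l l' : List S} :
    l' ∈ badChildren succ leb (u :: l) ↔
      ∃ t, step u t ∧ (∀ x ∈ u :: l, ¬le x t) ∧ l' = t :: u :: l := by
  simp [badChildren, headSucc, hsucc, ← Bool.not_eq_true, dominates_eq_true hleb,
    @eq_comm _ _ l', and_assoc]

theorem hasGoodChild_eq_true {u : S} {l : List S} :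
    hasGoodChild succ leb (u :: l) = true ↔ ∃ t, step u t ∧ ∃ x ∈ u :: l, le x t := by
  simp [hasGoodChild, headSucc, hsucc, dominates_eq_true hleb]

theorem mem_badHistories {s : S} {n : ℕ} {l : List S} :
    l ∈ badHistories succ leb s n ↔ IsHistory step s l ∧ l.length = n + 1 ∧ IsBad le l := by
  induction n generalizing l with
  | zero =>
    match l with
    | [] => simp [badHistories]
    | [x] => simp [badHistories, isHistory_singleton, IsBad]
    | _ :: _ :: _ => simp [badHistories]
  | succ n ih =>
    simp only [badHistories, List.mem_flatMap]
    constructor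
    · rintro ⟨_ | ⟨u, r⟩, hl, hl'⟩
      · simp [badChildren, headSucc] at hl'
      obtain ⟨t, hut, hdom, rfl⟩ := (mem_badChildren hsucc hleb).mp hl'
      obtain ⟨hhist, hlen, hbad⟩ := ih.mp hl
      exact ⟨isHistory_cons_cons.mpr ⟨hut, hhist⟩, by simp [hlen],
        List.pairwise_cons.mpr ⟨hdom, hbad⟩⟩
    · rintro ⟨hhist, hlen, hbad⟩
      match l, hhist, hlen, hbad with
      | t :: u :: r, hhist, hlen, hbad =>
        rw [isHistory_cons_cons] at hhist
        rw [IsBad, List.pairwise_cons] at hbad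
        exact ⟨u :: r, ih.mpr ⟨hhist.2, by simpa using hlen, hbad.2⟩,
          (mem_badChildren hsucc hleb).mpr ⟨t, hhist.1, hbad.1, rfl⟩⟩

theorem exists_hasGoodChild_of_hasInfiniteRun (hwqo : WellQuasiOrdered le) {s : S}
    (hs : HasInfiniteRun step s) :
    ∃ n, ∃ l ∈ badHistories succ leb s n, hasGoodChild succ leb l = true := by
  classical
  obtain ⟨f, rfl, hf⟩ := hs
  have hex : ∃ j, ∃ i < j, le (f i) (f j) := let ⟨i, j, hij, h⟩ := hwqo f; ⟨j, i, hij, h⟩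
  obtain ⟨i, hi, hle⟩ := Nat.find_spec hex
  obtain ⟨n, hn⟩ : ∃ n, Nat.find hex = n + 1 := Nat.exists_eq_add_one.mpr (by omega)
  have hbad : ∀ i j, i < j → j ≤ n → ¬le (f i) (f j) := fun i j hij hjn h =>
    Nat.find_min hex (by omega) ⟨i, hij, h⟩
  refine ⟨n, revPrefix f n, (mem_badHistories hsucc hleb).mpr
    ⟨isHistory_revPrefix hf n, by simp [revPrefix], isBad_revPrefix hbad⟩, ?_⟩
  rw [revPrefix_eq_cons, hasGoodChild_eq_true hsucc hleb, ← revPrefix_eq_cons]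
  exact ⟨f (n + 1), hf n, f i, mem_revPrefix.mpr ⟨i, by omega, rfl⟩, hn ▸ hle⟩

theorem drop_mem_badHistories {s : S} {i j : ℕ} (hij : i ≤ j) {l : List S}
    (hl : l ∈ badHistories succ leb s j) : l.drop (j - i) ∈ badHistories succ leb s i := by
  obtain ⟨hhist, hlen, hbad⟩ := (mem_badHistories hsucc hleb).mp hl
  exact (mem_badHistories hsucc hleb).mpr
    ⟨hhist.drop (by omega), by simp [hlen]; omega, hbad.drop⟩

theorem exists_badHistories_eq_nil (hwqo : WellQuasiOrdered le) (s : S) :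
    ∃ n, badHistories succ leb s n = [] := by
  by_contra! hne
  have : ∀ n, Nonempty {l // l ∈ badHistories succ leb s n} := fun n =>
    let ⟨l, hl⟩ := List.exists_mem_of_ne_nil _ (hne n); ⟨⟨l, hl⟩⟩
  have : ∀ n, Finite {l // l ∈ badHistories succ leb s n} := fun n =>
    (List.finite_toSet _).to_subtype
  -- Kőnig's lemma, for the levels of the tree of bad histories
  obtain ⟨F, hF⟩ := exists_seq_forall_proj_of_forall_finite
    (α := fun n => {l // l ∈ badHistories succ leb s n})
    (fun hij l => ⟨_, drop_mem_badHistories hsucc hleb hij l.2⟩) (by simp)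
    (fun i j k hij hjk l => by simp only [List.drop_drop]; congr 2; omega)
    (fun _ _ => Set.toFinite _)
  have hmem := fun i => (mem_badHistories hsucc hleb).mp (F i).2
  obtain ⟨j, hj⟩ := exists_not_isBad_of_drop_eq hwqo (F := fun i => (F i).1)
    (fun i h => by simpa [h] using (hmem i).2.1) (fun i j hij => congrArg Subtype.val (hF hij))
  exact hj (hmem j).2.2

theorem hasGoodChildBefore_iff_hasInfiniteRun [Std.Refl le] [IsTrans S le]
    (hcompat : StronglyCompatible step le) (hwqo : WellQuasiOrdered le) {s : S} {n : ℕ}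
    (hn : badHistories succ leb s n = []) :
    hasGoodChildBefore succ leb s n = true ↔ HasInfiniteRun step s := by
  rw [hasGoodChildBefore_eq_true]
  constructor
  · rintro ⟨m, -, _ | ⟨u, l⟩, hl, hdom⟩
    · simp [hasGoodChild, headSucc] at hdom
    obtain ⟨t, hut, x, hx, hxt⟩ := (hasGoodChild_eq_true hsucc hleb).mp hdom
    exact hasInfiniteRun_of_isHistory_of_le hcompat ((mem_badHistories hsucc hleb).mp hl).1
      hut hx hxt
  · intro hs
    obtain ⟨m, l, hl, hdom⟩ := exists_hasGoodChild_of_hasInfiniteRun hsucc hleb hwqo hs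
    refine ⟨m, ?_, l, hl, hdom⟩
    by_contra! hnm
    simp [badHistories_eq_nil_of_le hn hnm] at hl

end Search

section Computability

open Computable

variable [Primcodable S] {succ : S → List S} {leb : S → S → Bool}

theorem computable_headSucc (hsucc : Computable succ) : Computable (headSucc succ) :=
  option_getD (option_map Primrec.list_head?.to_comp (hsucc.comp snd).to₂) (const [])

theorem computable₂_dominates (hleb : Computable₂ leb) : Computable₂ (dominates leb) :=
  list_any fst (hleb.comp snd (snd.comp fst)).to₂

theorem computable_badChildren (hsucc : Computable succ) (hleb : Computable₂ leb) :
    Computable (badChildren succ leb) :=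
  list_map (list_filter (computable_headSucc hsucc)
      (Primrec.not.to_comp.comp ((computable₂_dominates hleb).comp fst snd)).to₂)
    (list_cons.comp snd fst).to₂

theorem computable_hasGoodChild (hsucc : Computable succ) (hleb : Computable₂ leb) :
    Computable (hasGoodChild succ leb) :=
  list_any (computable_headSucc hsucc) (computable₂_dominates hleb)

theorem computable₂_badHistories (hsucc : Computable succ) (hleb : Computable₂ leb) :
    Computable₂ (badHistories succ leb) := by
  refine (nat_rec snd (list_cons.comp (list_cons.comp fst (const [])) (const []))
    (list_flatMap (snd.comp snd) ((computable_badChildren hsucc hleb).comp snd).to₂).to₂).of_eq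
    fun p => ?_
  induction p.2 with
  | zero => rfl
  | succ n ih => simp [badHistories, ih]

theorem computable₂_hasGoodChildBefore (hsucc : Computable succ) (hleb : Computable₂ leb) :
    Computable₂ (hasGoodChildBefore succ leb) := by
  refine (nat_rec snd (const false) (Primrec.or.to_comp.comp (snd.comp snd)
    (list_any ((computable₂_badHistories hsucc hleb).comp (fst.comp fst) (fst.comp snd))
      ((computable_hasGoodChild hsucc hleb).comp snd).to₂)).to₂).of_eq fun p => ?_
  induction p.2 with
  | zero => rfl
  | succ n ih => simp [hasGoodChildBefore, ih]

theorem computable₂_verdict (hsucc : Computable succ) (hleb : Computable₂ leb) :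
    Computable₂ (verdict succ leb) := by
  have hempty : Primrec (@List.isEmpty (List S)) :=
    (Primrec.not.comp (Primrec.option_isSome.comp Primrec.list_head?)).of_eq fun l => by
      cases l <;> rfl
  exact cond (hempty.to_comp.comp (computable₂_badHistories hsucc hleb))
    (option_some.comp (computable₂_hasGoodChildBefore hsucc hleb)) (const none)

end Computability

end WSTS

/-- In a finitely branching well-structured transition system with computable successor
function and decidable (computable) well-quasi-order strongly compatible with the
transition relation, the set of states admitting an infinite computation is decidable. -/
theorem stmt_10 {S : Type} [Primcodable S]
    (step : S → S → Prop) (le : S → S → Prop)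
    (succ : S → List S) (hsucc : ∀ s t : S, step s t ↔ t ∈ succ s)
    (hsucc_comp : Computable succ)
    (leb : S → S → Bool) (hleb : ∀ s t : S, leb s t = true ↔ le s t)
    (hleb_comp : Computable₂ leb)
    (hrefl : Reflexive le) (htrans : Transitive le)
    (hwqo : ∀ f : ℕ → S, ∃ i j : ℕ, i < j ∧ le (f i) (f j))
    (hcompat : ∀ s₁ t₁ s₂ : S, le s₁ t₁ → step s₁ s₂ → ∃ t₂ : S, step t₁ t₂ ∧ le s₂ t₂) :
    ∃ d : S → Bool, Computable d ∧
      ∀ s : S, d s = true ↔ ∃ f : ℕ → S, f 0 = s ∧ ∀ n : ℕ, step (f n) (f (n + 1)) := by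
  have : Std.Refl le := ⟨hrefl⟩
  have : IsTrans S le := ⟨htrans⟩
  have hdom : ∀ s, (Nat.rfindOpt (WSTS.verdict succ leb s)).Dom := fun s =>
    let ⟨n, hn⟩ := WSTS.exists_badHistories_eq_nil hsucc hleb hwqo s
    Nat.rfindOpt_dom.mpr ⟨n, _, WSTS.verdict_eq_some.mpr ⟨hn, rfl⟩⟩
  refine ⟨fun s => (Nat.rfindOpt (WSTS.verdict succ leb s)).get (hdom s),
    (Partrec.rfindOpt (WSTS.computable₂_verdict hsucc_comp hleb_comp)).of_eq_tot
      fun s => Part.get_mem (hdom s), fun s => ?_⟩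
  obtain ⟨n, hn⟩ := Nat.rfindOpt_spec (Part.get_mem (hdom s))
  obtain ⟨hnil, hfound⟩ := WSTS.verdict_eq_some.mp hn
  dsimp only
  rw [← hfound]
  exact WSTS.hasGoodChildBefore_iff_hasInfiniteRun hsucc hleb hcompat hwqo hnil
end

section
/- In a finitely branching transition system (S, →) equipped with a well-quasi-order ≤ strongly compatible with →, if there is an infinite computation s₀ → s₁ → s₂ → ⋯ then there exist indices i < j with s_i ≤ s_j; conversely, if some finite computation s₀ → ⋯ → s_j has s_i ≤ s_j for some i < j, then s₀ admits an infinite computation (obtained by repeatedly 'pumping' the segment from i to j using strong compatibility). -/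
/-- In a finitely branching WSTS with strong compatibility: every infinite computation
contains `i < j` with `s_i ≤ s_j`, and conversely any finite computation containing such a
pair can be pumped into an infinite computation. -/
theorem stmt_12 {S : Type*} (step : S → S → Prop) (le : S → S → Prop)
    (hfb : ∀ s : S, {t : S | step s t}.Finite)
    (hrefl : Reflexive le) (htrans : Transitive le)
    (hwqo : ∀ f : ℕ → S, ∃ i j : ℕ, i < j ∧ le (f i) (f j))
    (hcompat : ∀ s₁ t₁ s₂ : S, le s₁ t₁ → step s₁ s₂ → ∃ t₂ : S, step t₁ t₂ ∧ le s₂ t₂) :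
    (∀ f : ℕ → S, (∀ n : ℕ, step (f n) (f (n + 1))) →
        ∃ i j : ℕ, i < j ∧ le (f i) (f j)) ∧
    (∀ (n : ℕ) (g : ℕ → S), (∀ k < n, step (g k) (g (k + 1))) →
        (∃ i j : ℕ, i < j ∧ j ≤ n ∧ le (g i) (g j)) →
        ∃ f : ℕ → S, f 0 = g 0 ∧ ∀ k : ℕ, step (f k) (f (k + 1))) := by
  constructor
  · intro f _; exact hwqo f
  · rintro n g hg ⟨i, j, hij, hjn, hle⟩
    have key : ∀ p : {p : S × ℕ // p.2 < j ∧ le (g p.2) p.1},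
        ∃ q : {p : S × ℕ // p.2 < j ∧ le (g p.2) p.1}, step p.1.1 q.1.1 := by
      rintro ⟨⟨s, m⟩, hm, hles⟩
      have hmn : m < n := lt_of_lt_of_le hm hjn
      obtain ⟨t, hst, hlet⟩ := hcompat (g m) s (g (m + 1)) hles (hg m hmn)
      by_cases heq : m + 1 = j
      · exact ⟨⟨(t, i), hij, htrans hle (heq ▸ hlet)⟩, hst⟩
      · exact ⟨⟨(t, m + 1), by omega, hlet⟩, hst⟩
    choose next hnext using key
    let F : ℕ → {p : S × ℕ // p.2 < j ∧ le (g p.2) p.1} :=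
      fun k => Nat.rec ⟨(g 0, 0), by omega, hrefl (g 0)⟩ (fun _ p => next p) k
    exact ⟨fun k => (F k).1.1, rfl, fun k => hnext (F k)⟩
end

section
/- Monotone sequence compression: let s = ⟨c₁,d₁⟩⋯⟨c_n,d_n⟩ be a monotonically increasing reactive sequence (CT ⊨ d_j → c_j for all j and CT ⊨ c_{i+1} → d_i for all i), let X be a set of variables, and let η(s, X) be obtained by (1) existentially quantifying all variables outside X in each constraint, (2) deleting all stuttering pairs ⟨c,d⟩ with c ↔ d except the last, and (3) repeatedly fusing consecutive pairs ⟨c_l,d_l⟩⟨c_{l+1},d_{l+1}⟩ with d_l → c_{l+1} into ⟨c_l,d_{l+1}⟩. Then η(s, X) is a strictly increasing reactive sequence with respect to X. -/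
open Classical

variable {V D : Type*}

/-- A constraint (modeled semantically as its set of solutions, i.e. valuations `V → D`)
has its free variables among `X` if it only depends on the values of variables in `X`. -/
def ConstraintDependsOn (X : Set V) (c : Set (V → D)) : Prop :=
  ∀ v w : V → D, (∀ x ∈ X, v x = w x) → (v ∈ c ↔ w ∈ c)

/-- Existential quantification of all variables outside `X` (the operation `∃_{-X}`). -/
def proj (X : Set V) (c : Set (V → D)) : Set (V → D) :=
  {v : V → D | ∃ w ∈ c, ∀ x ∈ X, w x = v x}

/-- Step (2) of `η`: delete all stuttering pairs `⟨c,d⟩` with `c ↔ d`, except the last one. -/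
noncomputable def removeStutter (l : List (Set (V → D) × Set (V → D))) :
    List (Set (V → D) × Set (V → D)) :=
  l.dropLast.filter (fun p => decide (p.1 ≠ p.2)) ++ l.drop (l.length - 1)

/-- One fusion step (3) of `η`: two consecutive pairs `⟨c,d⟩⟨c',d'⟩` with `d → c'`
(semantically `d ⊆ c'`) are replaced by `⟨c,d'⟩`. -/
inductive FuseStep :
    List (Set (V → D) × Set (V → D)) → List (Set (V → D) × Set (V → D)) → Prop
  | fuse (l₁ l₂ : List (Set (V → D) × Set (V → D))) (c d c' d' : Set (V → D))
      (h : d ⊆ c') : FuseStep (l₁ ++ (c, d) :: (c', d') :: l₂) (l₁ ++ (c, d') :: l₂)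

/-- A reactive sequence is strictly increasing w.r.t. `X`: all constraints have free
variables in `X`, each `d_j` entails `c_j`, each `c_{i+1}` entails `d_i` but `d_i` does not
entail `c_{i+1}`, and `c_i` does not entail `d_i` (for `i < n`). -/
def StrictlyIncreasing (X : Set V) (l : List (Set (V → D) × Set (V → D))) : Prop :=
  (∀ p ∈ l, ConstraintDependsOn X p.1 ∧ ConstraintDependsOn X p.2 ∧ p.2 ⊆ p.1) ∧
  ∀ (i : ℕ) (h : i + 1 < l.length),
    (l.get ⟨i + 1, h⟩).1 ⊆ (l.get ⟨i, by omega⟩).2 ∧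
    ¬ (l.get ⟨i, by omega⟩).2 ⊆ (l.get ⟨i + 1, h⟩).1 ∧
    ¬ (l.get ⟨i, by omega⟩).1 ⊆ (l.get ⟨i, by omega⟩).2

/-!
Projection is monotone, so the projected sequence satisfies `c_j ⊆ d_i` for all `i < j`, not
only for neighbours. This pairwise form survives deleting pairs (stutter removal) and fusing
them, and so does "only the last pair may stutter": fusing `⟨c,d⟩⟨c',d'⟩` into `⟨c,d'⟩` with
`c = d'` would squeeze `d' ⊆ c' ⊆ d ⊆ c` into `c = d`. Once no fusion applies, `d_i ⊆ c_{i+1}`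
fails for every `i`, and `c_i ⊆ d_i` fails because `⟨c_i,d_i⟩` is not the last pair.
-/

lemma List.pairwise_fst_le_snd_of_succ {α : Type*} [Preorder α] {l : List (α × α)}
    (hpair : ∀ p ∈ l, p.2 ≤ p.1)
    (hstep : ∀ (i : ℕ) (h : i + 1 < l.length), l[i + 1].1 ≤ l[i].2) :
    l.Pairwise (fun p q => q.1 ≤ p.2) := by
  rw [List.pairwise_iff_getElem]
  intro i j hi hj hij
  induction j, hij using Nat.le_induction with
  | base => exact hstep i hj
  | succ j hij ih =>
    calc l[j + 1].1 ≤ l[j].2 := hstep j hj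
      _ ≤ l[j].1 := hpair _ (List.getElem_mem _)
      _ ≤ l[i].2 := ih (by omega)

lemma constraintDependsOn_proj (X : Set V) (c : Set (V → D)) :
    ConstraintDependsOn X (proj X c) := by
  intro v w hvw
  constructor
  · rintro ⟨u, hu, h⟩
    exact ⟨u, hu, fun x hx => (h x hx).trans (hvw x hx)⟩
  · rintro ⟨u, hu, h⟩
    exact ⟨u, hu, fun x hx => (h x hx).trans (hvw x hx).symm⟩

lemma proj_mono (X : Set V) : Monotone (proj (D := D) X) :=
  fun _ _ h _ ⟨u, hu, hux⟩ => ⟨u, h hu, hux⟩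

lemma removeStutter_sublist (l : List (Set (V → D) × Set (V → D))) :
    (removeStutter l).Sublist l := by
  unfold removeStutter
  rw [List.dropLast_eq_take]
  conv_rhs => rw [← List.take_append_drop (l.length - 1) l]
  exact List.filter_sublist.append (List.Sublist.refl _)

lemma pairwise_removeStutter
    {R : Set (V → D) × Set (V → D) → Set (V → D) × Set (V → D) → Prop}
    {l : List (Set (V → D) × Set (V → D))} (hl : l.Pairwise R) :
    (removeStutter l).Pairwise (fun p q => R p q ∧ p.1 ≠ p.2) := by
  refine (hl.sublist (removeStutter_sublist l)).and ?_
  have hlast : (l.drop (l.length - 1)).length ≤ 1 := by simp only [List.length_drop]; omega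
  refine List.pairwise_append.2 ⟨?_, ?_, fun p hp _ _ => by simpa using (List.of_mem_filter hp)⟩
  · exact List.pairwise_of_forall_mem_list fun p hp _ _ => by simpa using (List.of_mem_filter hp)
  · match l.drop (l.length - 1), hlast with
    | [], _ => exact List.Pairwise.nil
    | [_], _ => exact List.pairwise_singleton _ _

/-- The conjunct `p.1 ≠ p.2` of the `Pairwise` relation mentions only the earlier pair, so it
says that every pair except the last is non-stuttering. -/
def EtaInvariant (X : Set V) (l : List (Set (V → D) × Set (V → D))) : Prop :=
  (∀ p ∈ l, ConstraintDependsOn X p.1 ∧ ConstraintDependsOn X p.2 ∧ p.2 ⊆ p.1) ∧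
  l.Pairwise (fun p q => q.1 ⊆ p.2 ∧ p.1 ≠ p.2)

lemma EtaInvariant.fuseStep {X : Set V} {l l' : List (Set (V → D) × Set (V → D))}
    (hl : EtaInvariant X l) (hf : FuseStep l l') : EtaInvariant X l' := by
  obtain ⟨l₁, l₂, c, d, c', d', -⟩ := hf
  obtain ⟨hpairs, hpw⟩ := hl
  simp only [List.mem_append, List.mem_cons] at hpairs
  obtain ⟨hX, -, hdc⟩ := hpairs (c, d) (by simp)
  obtain ⟨-, hX', hdc'⟩ := hpairs (c', d') (by simp)
  simp only [List.pairwise_append, List.pairwise_cons, List.mem_cons] at hpw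
  obtain ⟨hpw₁, ⟨hcd, hpw₂, hpw₃⟩, hcross⟩ := hpw
  obtain ⟨hc'd, hne⟩ := hcd (c', d') (Or.inl rfl)
  have hne' : c ≠ d' := fun h => hne ((h ▸ hdc'.trans hc'd).antisymm hdc)
  refine ⟨fun p hp => ?_, ?_⟩
  · simp only [List.mem_append, List.mem_cons] at hp
    rcases hp with hp | rfl | hp
    · exact hpairs p (Or.inl hp)
    · exact ⟨hX, hX', hdc'.trans (hc'd.trans hdc)⟩
    · exact hpairs p (by simp [hp])
  · simp only [List.pairwise_append, List.pairwise_cons, List.mem_cons]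
    refine ⟨hpw₁, ⟨fun q hq => ⟨(hpw₂ q hq).1, hne'⟩, hpw₃⟩, fun a ha b hb => ?_⟩
    rcases hb with rfl | hb
    · exact hcross a ha (c, d) (Or.inl rfl)
    · exact hcross a ha b (by simp [hb])

lemma EtaInvariant.reflTransGen {X : Set V} {l l' : List (Set (V → D) × Set (V → D))}
    (hl : EtaInvariant X l) (h : Relation.ReflTransGen FuseStep l l') : EtaInvariant X l' := by
  induction h with
  | refl => exact hl
  | tail _ hstep ih => exact ih.fuseStep hstep

lemma exists_fuseStep_of_subset {l : List (Set (V → D) × Set (V → D))} {i : ℕ}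
    (h : i + 1 < l.length) (hsub : l[i].2 ⊆ l[i + 1].1) : ∃ t, FuseStep l t := by
  have hl : l = l.take i ++ (l[i].1, l[i].2) :: (l[i + 1].1, l[i + 1].2) :: l.drop (i + 2) := by
    rw [List.getElem_cons_drop, List.getElem_cons_drop, List.take_append_drop]
  have hstep := FuseStep.fuse (l.take i) (l.drop (i + 2)) l[i].1 _ _ l[i + 1].2 hsub
  rw [← hl] at hstep
  exact ⟨_, hstep⟩

lemma EtaInvariant.strictlyIncreasing {X : Set V} {l : List (Set (V → D) × Set (V → D))}
    (hl : EtaInvariant X l) (hclosed : ∀ t, ¬ FuseStep l t) : StrictlyIncreasing X l := by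
  obtain ⟨hpairs, hpw⟩ := hl
  refine ⟨hpairs, fun i h => ?_⟩
  obtain ⟨hlink, hne⟩ := List.pairwise_iff_getElem.1 hpw i (i + 1) (by omega) h (by omega)
  have hdc : l[i].2 ⊆ l[i].1 := (hpairs _ (List.getElem_mem _)).2.2
  exact ⟨hlink, fun hsub => (exists_fuseStep_of_subset h hsub).elim hclosed,
    fun hcd => hne (hcd.antisymm hdc)⟩

lemma etaInvariant_removeStutter_proj (X : Set V) {s : List (Set (V → D) × Set (V → D))}
    (hpairs : ∀ p ∈ s, p.2 ⊆ p.1) (hpw : s.Pairwise (fun p q => q.1 ⊆ p.2)) :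
    EtaInvariant X (removeStutter (s.map fun p => (proj X p.1, proj X p.2))) := by
  refine ⟨fun p hp => ?_, pairwise_removeStutter ?_⟩
  · obtain ⟨q, hq, rfl⟩ := List.mem_map.1 ((removeStutter_sublist _).subset hp)
    exact ⟨constraintDependsOn_proj X q.1, constraintDependsOn_proj X q.2,
      proj_mono X (hpairs q hq)⟩
  · exact List.pairwise_map.2 (hpw.imp fun h => proj_mono X h)

/-- The operator `η` applied to a monotonically increasing reactive sequence yields a
strictly increasing reactive sequence with respect to `X`. -/
theorem stmt_16 (X : Set V) (s : List (Set (V → D) × Set (V → D)))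
    (hmono₁ : ∀ p ∈ s, p.2 ⊆ p.1)
    (hmono₂ : ∀ (i : ℕ) (h : i + 1 < s.length),
      (s.get ⟨i + 1, h⟩).1 ⊆ (s.get ⟨i, by omega⟩).2)
    (s' s'' s''' : List (Set (V → D) × Set (V → D)))
    (hs' : s' = s.map (fun p => (proj X p.1, proj X p.2)))
    (hs'' : s'' = removeStutter s')
    (hs''' : Relation.ReflTransGen FuseStep s'' s''')
    (hclosed : ∀ t, ¬ FuseStep s''' t) :
    StrictlyIncreasing X s''' := by
  have hpw : s.Pairwise (fun p q => q.1 ⊆ p.2) :=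
    List.pairwise_fst_le_snd_of_succ hmono₁ fun i h => by simpa using hmono₂ i h
  subst hs' hs''
  exact ((etaInvariant_removeStutter_proj X hmono₁ hpw).reflTransGen hs''').strictlyIncreasing
    hclosed
end
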